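/- Let n, p be positive natural numbers, A an n×n real matrix, C a p×n real matrix, λ > 0, ρ > 0, and let P be an n×n symmetric positive definite matrix such that AᵀP + PA + 2λP − ρ CᵀC ⪯ 0. Then the observer gain K = (ρ/2) P⁻¹ Cᵀ satisfies (A − KC)ᵀP + P(A − KC) + 2λP ⪯ 0. -/
import Mathlib


open Matrix Filter Real Topology

noncomputable section

/-- `M ⪯ 0`: a real matrix is negative semidefinite iff `-M` is positive semidefinite. -/
def Matrix.NegSemidef {n : Type*} [Fintype n] (M : Matrix n n ℝ) : Prop := (-M).PosSemidef

/-- `M ≺ 0`: a real matrix is negative definite iff `-M` is positive definite. -/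
def Matrix.NegDef {n : Type*} [Fintype n] (M : Matrix n n ℝ) : Prop := (-M).PosDef

/-- If `P ≻ 0` and `ρ > 0` satisfy the LMI
`AᵀP + PA + 2λP − ρCᵀC ⪯ 0`, then the observer gain `K = (ρ/2) P⁻¹Cᵀ` satisfies
`(A − KC)ᵀP + P(A − KC) + 2λP ⪯ 0`, i.e. the estimation-error dynamics are contracting
with rate `λ` in the metric `P`. -/
theorem stmt_7 (n p : ℕ) (hn : 0 < n) (hp : 0 < p)
    (A : Matrix (Fin n) (Fin n) ℝ) (C : Matrix (Fin p) (Fin n) ℝ)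
    (lam ρ : ℝ) (hlam : 0 < lam) (hρ : 0 < ρ)
    (P : Matrix (Fin n) (Fin n) ℝ) (hP : P.PosDef)
    (hLMI : (Aᵀ * P + P * A + (2 * lam) • P - ρ • (Cᵀ * C)).NegSemidef) :
    (((A - (ρ / 2) • (P⁻¹ * Cᵀ) * C)ᵀ * P + P * (A - (ρ / 2) • (P⁻¹ * Cᵀ) * C))
        + (2 * lam) • P).NegSemidef := by
  have hinv : P * P⁻¹ = 1 := Matrix.mul_nonsing_inv P (isUnit_iff_ne_zero.mpr hP.det_pos.ne')
  have hinv' : P⁻¹ * P = 1 := Matrix.nonsing_inv_mul P (isUnit_iff_ne_zero.mpr hP.det_pos.ne')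
  have hsym : Pᵀ = P := hP.isHermitian
  have hinvsym : P⁻¹ᵀ = P⁻¹ := by rw [Matrix.transpose_nonsing_inv, hsym]
  have key : ((A - (ρ / 2) • (P⁻¹ * Cᵀ) * C)ᵀ * P + P * (A - (ρ / 2) • (P⁻¹ * Cᵀ) * C))
        + (2 * lam) • P = Aᵀ * P + P * A + (2 * lam) • P - ρ • (Cᵀ * C) := by
    have h1 : ((ρ / 2) • (P⁻¹ * Cᵀ) * C)ᵀ * P = (ρ / 2) • (Cᵀ * C) := by
      rw [Matrix.smul_mul, Matrix.transpose_smul, Matrix.smul_mul, Matrix.transpose_mul,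
        Matrix.transpose_mul, Matrix.transpose_transpose, hinvsym,
        Matrix.mul_assoc, Matrix.mul_assoc, hinv', Matrix.mul_one]
    have h2 : P * ((ρ / 2) • (P⁻¹ * Cᵀ) * C) = (ρ / 2) • (Cᵀ * C) := by
      rw [Matrix.smul_mul, Matrix.mul_smul, ← Matrix.mul_assoc, ← Matrix.mul_assoc, hinv,
        Matrix.one_mul]
    rw [Matrix.transpose_sub, Matrix.sub_mul, Matrix.mul_sub, h1, h2]
    have : (ρ / 2) • (Cᵀ * C) + (ρ / 2) • (Cᵀ * C) = ρ • (Cᵀ * C) := by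
      rw [← add_smul]; ring_nf
    abel_nf
    rw [← this]; abel
  rw [key]; exact hLMI
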